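/- Let λ < 0 and let G_μ = span{x ∈ H_{1/2} : A₀x = νx, ν ≤ λ²} (a finite-dimensional space since A₀⁻¹ is compact). For every sequence (x_n, y_n) ∈ 𝒟(𝒜) ∩ (G_λ × G_λ)^⊥ with ‖(x_n,y_n)‖ = 1 and (𝒜 − λ)(x_n,y_n) → 0, one has liminf_{n→∞} (⟨A₀x_n, x_n⟩ − λ²⟨x_n, x_n⟩) > 0. -/

import Mathlib

open scoped InnerProductSpace ComplexConjugate
open Filter

/-- Abstract setup for the second order equation `z̈ + A₀ z + D ż = 0`:
`Hhalf` plays the role of `H_{1/2} = 𝒟(A₀^{1/2})` with the norm `‖A₀^{1/2}·‖`, `H` is the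
pivot Hilbert space and `Hm` is the dual `H_{-1/2}`; `ι : H_{1/2} → H` and `j : H → H_{-1/2}`
are the (dense, injective, continuous) inclusions; the uniformly positive self-adjoint
operator `A₀` induces an isometric isomorphism `A₀ : H_{1/2} → H_{-1/2}`; the damping
operator `D : H_{1/2} → H_{-1/2}` is bounded, and `A₀^{-1/2} D A₀^{-1/2}` is self-adjoint
nonnegative, expressed via the duality pairing
`⟨u, z⟩_{H_{-1/2}×H_{1/2}} = ⟪A₀⁻¹ u, z⟫_{H_{1/2}}`. -/
structure BeamSetup (Hhalf H Hm : Type*)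
    [NormedAddCommGroup Hhalf] [InnerProductSpace ℂ Hhalf] [CompleteSpace Hhalf]
    [NormedAddCommGroup H] [InnerProductSpace ℂ H] [CompleteSpace H]
    [NormedAddCommGroup Hm] [InnerProductSpace ℂ Hm] [CompleteSpace Hm] : Type _ where
  ι : Hhalf →L[ℂ] H
  ι_inj : Function.Injective ι
  ι_dense : DenseRange ι
  j : H →L[ℂ] Hm
  j_inj : Function.Injective j
  A₀ : Hhalf ≃ₗᵢ[ℂ] Hm
  compat : ∀ (y : H) (z : Hhalf), ⟪A₀.symm (j y), z⟫_ℂ = ⟪y, ι z⟫_ℂ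
  D : Hhalf →L[ℂ] Hm
  D_symm : ∀ z w : Hhalf, ⟪A₀.symm (D z), w⟫_ℂ = ⟪z, A₀.symm (D w)⟫_ℂ
  D_nonneg : ∀ z : Hhalf, 0 ≤ (⟪A₀.symm (D z), z⟫_ℂ).re

namespace BeamSetup

variable {Hhalf H Hm : Type*}
    [NormedAddCommGroup Hhalf] [InnerProductSpace ℂ Hhalf] [CompleteSpace Hhalf]
    [NormedAddCommGroup H] [InnerProductSpace ℂ H] [CompleteSpace H]
    [NormedAddCommGroup Hm] [InnerProductSpace ℂ Hm] [CompleteSpace Hm]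
    (S : BeamSetup Hhalf H Hm)

/-- `A₀⁻¹ : H_{-1/2} → H_{1/2}` as a continuous linear map. -/
noncomputable def Ai : Hm →L[ℂ] Hhalf :=
  (S.A₀.symm.toContinuousLinearEquiv : Hm ≃L[ℂ] Hhalf)

/-- `A₀⁻¹ D` as a bounded operator on `H_{1/2}`. -/
noncomputable def T : Hhalf →L[ℂ] Hhalf := S.Ai.comp S.D

/-- `A₀⁻¹ : H → H_{1/2}`. -/
noncomputable def Ainv : H →L[ℂ] Hhalf := S.Ai.comp S.j

/-- `A₀⁻¹` considered as a bounded operator on `H_{1/2}`. -/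
noncomputable def AinvR : Hhalf →L[ℂ] Hhalf := S.Ainv.comp S.ι

/-- `A₀⁻¹` considered as a bounded operator on `H`. -/
noncomputable def AinvH : H →L[ℂ] H := S.ι.comp S.Ainv

/-- `λ` is an eigenvalue of the operator matrix `𝒜 = [[0, I], [-A₀, -D]]` with domain
`𝒟(𝒜) = {(z,w) ∈ H_{1/2} × H_{1/2} : A₀ z + D w ∈ H}`: there is a nonzero
`(z, ι w) ∈ 𝒟(𝒜)` (the domain condition being `j y = A₀ z + D w`, so that
`𝒜 (z, ι w) = (w, -y)`) with `𝒜 (z, ι w) = λ • (z, ι w)`. -/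
def IsEigenvalue (lam : ℂ) : Prop :=
  ∃ (z w : Hhalf) (y : H), S.j y = S.A₀ z + S.D w ∧
    ((z, S.ι w) : Hhalf × H) ≠ 0 ∧ w = lam • z ∧ -y = lam • S.ι w

/-- `λ` belongs to the resolvent set of `𝒜`: there is a bounded operator `R` on
`H_{1/2} × H` mapping onto `𝒟(𝒜)` which inverts `𝒜 - λ` from both sides. -/
def InResolvent (lam : ℂ) : Prop :=
  ∃ R : (Hhalf × H) →L[ℂ] (Hhalf × H),
    (∀ q : Hhalf × H, ∃ (z w : Hhalf) (y : H),
        R q = (z, S.ι w) ∧ S.j y = S.A₀ z + S.D w ∧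
        ((w, -y) : Hhalf × H) - lam • ((z, S.ι w) : Hhalf × H) = q) ∧
    (∀ (z w : Hhalf) (y : H), S.j y = S.A₀ z + S.D w →
        R (((w, -y) : Hhalf × H) - lam • ((z, S.ι w) : Hhalf × H)) = (z, S.ι w))


end BeamSetup

open BeamSetup

/-- The essential spectrum of a bounded operator: the set of `λ` for which `T - λ` is not
Fredholm (finite-dimensional kernel and finite-codimensional range). -/
def essSpectrum {X : Type*} [NormedAddCommGroup X] [NormedSpace ℂ X] (T : X →L[ℂ] X) :
    Set ℂ :=
  {lam | ¬ (FiniteDimensional ℂ (LinearMap.ker ((T - lam • (1 : X →L[ℂ] X) : X →L[ℂ] X) : X →ₗ[ℂ] X)) ∧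
            FiniteDimensional ℂ (X ⧸ LinearMap.range ((T - lam • (1 : X →L[ℂ] X) : X →L[ℂ] X) : X →ₗ[ℂ] X)))}

/-! On `H_{1/2}` with the energy inner product, `K = A₀⁻¹` is compact, self-adjoint and
nonnegative, with `⟪K x, x⟫ = ‖x‖²_H`; it preserves `G` and hence `Gᗮ`. If the restriction of
`K` to `Gᗮ` has norm `μ > 0`, then `μ` is an eigenvalue of it, and an eigenvector is an
eigenvector of `A₀` for `1/μ` lying in `Gᗮ`, so `1/μ > λ²`. Thus
`‖x‖² - λ² ‖x‖²_H ≥ (1 - μ λ²) ‖x‖²` on `Gᗮ`, and `‖xₙ‖` stays away from `0` because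
`wₙ - λ xₙ → 0` while `‖xₙ‖² + ‖wₙ‖²_H = 1`. -/

open Module.End

theorem isCompactOperator_of_sq_norm_le {𝕜 E F G : Type*} [NontriviallyNormedField 𝕜]
    [NormedAddCommGroup E] [NormedSpace 𝕜 E] [NormedAddCommGroup F] [NormedSpace 𝕜 F]
    [CompleteSpace F] [NormedAddCommGroup G] [NormedSpace 𝕜 G]
    {R : E →L[𝕜] F} {Q : E →L[𝕜] G} (hQ : IsCompactOperator Q)
    (hRQ : ∀ y, ‖R y‖ ^ 2 ≤ ‖y‖ * ‖Q y‖) : IsCompactOperator R := by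
  -- An `ε² / 2`-net of `Q '' B`, pulled back to `B`, is mapped by `R` to an `ε`-net of `R '' B`.
  set B := Metric.closedBall (0 : E) 1
  refine (isCompactOperator_iff_isCompact_closure_image_closedBall (R : E →ₗ[𝕜] F) one_pos).mpr
    ((Metric.totallyBounded_iff.mpr fun ε hε => ?_).closure.isCompact_of_isClosed isClosed_closure)
  have hQB : TotallyBounded (Q '' B) :=
    (hQ.isCompact_closure_image_closedBall 1).totallyBounded.subset subset_closure
  obtain ⟨t, htQB, ht, hcover⟩ := totallyBounded_iff_subset.mp hQB _
    (Metric.dist_mem_uniformity (half_pos (pow_pos hε 2)))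
  set g := Function.invFunOn Q B
  refine ⟨(R ∘ g) '' t, ht.image _, ?_⟩
  rintro _ ⟨x, hx, rfl⟩
  obtain ⟨y, hyt, hxy⟩ := Set.mem_iUnion₂.mp (hcover ⟨x, hx, rfl⟩)
  have hy : ∃ a ∈ B, Q a = y := htQB hyt
  refine Set.mem_iUnion₂.mpr ⟨R (g y), ⟨y, hyt, rfl⟩, ?_⟩
  have hxg : ‖x - g y‖ ≤ 2 := by
    have hgB : g y ∈ B := Function.invFunOn_mem hy
    rw [Metric.mem_closedBall, dist_zero_right] at hx hgB
    linarith [norm_sub_le x (g y)]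
  have hQxg : ‖Q (x - g y)‖ < ε ^ 2 / 2 := by
    rw [map_sub, Function.invFunOn_eq hy, ← dist_eq_norm]; exact hxy
  rw [Metric.mem_ball, dist_eq_norm]
  change ‖R x - R (g y)‖ < ε
  rw [← map_sub]
  refine lt_of_pow_lt_pow_left₀ 2 hε.le ?_
  calc ‖R (x - g y)‖ ^ 2 ≤ ‖x - g y‖ * ‖Q (x - g y)‖ := hRQ _
    _ ≤ 2 * ‖Q (x - g y)‖ := by gcongr
    _ < ε ^ 2 := by linarith

section

variable {𝕜 E : Type*} [RCLike 𝕜] [NormedAddCommGroup E] [InnerProductSpace 𝕜 E]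

theorem LinearMap.IsSymmetric.mem_orthogonal_of_invariant {T : E →ₗ[𝕜] E} (hT : T.IsSymmetric)
    {V : Submodule 𝕜 E} (hV : ∀ v ∈ V, T v ∈ V) {x : E} (hx : x ∈ Vᗮ) : T x ∈ Vᗮ :=
  fun w hw => by rw [← hT]; exact hx _ (hV w hw)

theorem IsCompactOperator.hasEigenvalue_norm_of_nonneg [CompleteSpace E] {T : E →L[𝕜] E}
    (hT : IsCompactOperator T) (hsymm : (T : E →ₗ[𝕜] E).IsSymmetric)
    (hnonneg : ∀ x, 0 ≤ RCLike.re ⟪T x, x⟫_𝕜) (hT0 : T ≠ 0) :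
    HasEigenvalue (T : Module.End 𝕜 E) (‖T‖ : 𝕜) := by
  have : Nontrivial E := by
    by_contra h
    rw [not_nontrivial_iff_subsingleton] at h
    exact hT0 (Subsingleton.elim _ _)
  rw [hT.hasEigenvalue_iff_mem_spectrum (by simpa using hT0)]
  by_contra hspec
  obtain ⟨ε, hε, hle⟩ := T.rayleighQuotient_le_of_norm_mem_resolventSet
    (by rw [RCLike.algebraMap_eq_ofReal]; exact not_not.mp hspec)
  have : ‖T‖ ≤ ‖T‖ - ε := by
    conv_lhs => rw [T.norm_eq_iSup_rayleighQuotient hsymm]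
    exact ciSup_le fun x =>
      (abs_of_nonneg (div_nonneg (hnonneg x) (sq_nonneg _))).trans_le (hle x)
  linarith

end

namespace BeamSetup

variable {Hhalf H Hm : Type*}
    [NormedAddCommGroup Hhalf] [InnerProductSpace ℂ Hhalf] [CompleteSpace Hhalf]
    [NormedAddCommGroup H] [InnerProductSpace ℂ H] [CompleteSpace H]
    [NormedAddCommGroup Hm] [InnerProductSpace ℂ Hm] [CompleteSpace Hm]
    (S : BeamSetup Hhalf H Hm)

/-- `S.lowModes (λ ^ 2)` is the space `G` of the statement. -/
def lowModes (c : ℝ) : Submodule ℂ Hhalf :=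
  Submodule.span ℂ {g : Hhalf | ∃ ν : ℝ, ν ≤ c ∧ S.A₀ g = (ν : ℂ) • S.j (S.ι g)}

theorem AinvR_apply (x : Hhalf) : S.AinvR x = S.A₀.symm (S.j (S.ι x)) := rfl

theorem A₀_AinvR (x : Hhalf) : S.A₀ (S.AinvR x) = S.j (S.ι x) :=
  S.A₀.apply_symm_apply _

theorem inner_AinvR_left (x y : Hhalf) : ⟪S.AinvR x, y⟫_ℂ = ⟪S.ι x, S.ι y⟫_ℂ :=
  S.compat _ _

theorem isSymmetric_AinvR : (S.AinvR : Hhalf →ₗ[ℂ] Hhalf).IsSymmetric := fun x y => by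
  change ⟪S.AinvR x, y⟫_ℂ = ⟪x, S.AinvR y⟫_ℂ
  rw [inner_AinvR_left, ← inner_conj_symm x, inner_AinvR_left, inner_conj_symm]

theorem re_inner_AinvR_self (x : Hhalf) : RCLike.re ⟪S.AinvR x, x⟫_ℂ = ‖S.ι x‖ ^ 2 := by
  rw [inner_AinvR_left, inner_self_eq_norm_sq]

theorem isCompactOperator_AinvR (hcpt : IsCompactOperator S.AinvH) :
    IsCompactOperator S.AinvR := by
  refine (isCompactOperator_of_sq_norm_le (R := S.Ainv) hcpt fun y => ?_).comp_clm S.ι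
  calc ‖S.Ainv y‖ ^ 2 = RCLike.re ⟪S.Ainv y, S.Ainv y⟫_ℂ := (inner_self_eq_norm_sq _).symm
    _ = RCLike.re ⟪y, S.AinvH y⟫_ℂ := congrArg RCLike.re (S.compat y (S.Ainv y))
    _ ≤ ‖y‖ * ‖S.AinvH y‖ := re_inner_le_norm _ _

theorem AinvR_mem_lowModes {c : ℝ} {g : Hhalf} (hg : g ∈ S.lowModes c) :
    S.AinvR g ∈ S.lowModes c := by
  induction hg using Submodule.span_induction with
  | mem g hg =>
    obtain ⟨ν, hν, hA⟩ := hg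
    have hg : g = (ν : ℂ) • S.AinvR g := by
      simpa only [AinvR_apply, LinearIsometryEquiv.symm_apply_apply, map_smul] using
        congrArg S.A₀.symm hA
    rcases eq_or_ne (ν : ℂ) 0 with h0 | h0
    · rw [hg, h0, zero_smul, map_zero]
      exact zero_mem _
    · rw [(eq_inv_smul_iff₀ h0).mpr hg.symm]
      exact Submodule.smul_mem _ _ (Submodule.subset_span ⟨ν, hν, hA⟩)
  | zero => simp
  | add a b _ _ ha hb => rw [map_add]; exact add_mem ha hb
  | smul a x _ hx => rw [map_smul]; exact Submodule.smul_mem _ _ hx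

theorem exists_sq_norm_le_of_mem_orthogonal_lowModes (hcpt : IsCompactOperator S.AinvH)
    (c : ℝ) : ∃ μ : ℝ, μ * c < 1 ∧ ∀ x ∈ (S.lowModes c)ᗮ, ‖S.ι x‖ ^ 2 ≤ μ * ‖x‖ ^ 2 := by
  set V := (S.lowModes c)ᗮ
  have hV : ∀ x ∈ V, S.AinvR x ∈ V := fun x hx =>
    S.isSymmetric_AinvR.mem_orthogonal_of_invariant (fun _ => S.AinvR_mem_lowModes) hx
  set K := S.AinvR.restrict hV
  refine ⟨‖K‖, ?_, fun x hx => ?_⟩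
  · by_contra! hc
    have hKpos : 0 < ‖K‖ := by
      by_contra! hK
      rw [le_antisymm hK (norm_nonneg K), zero_mul] at hc
      linarith
    have hK0 : K ≠ 0 := (norm_pos_iff (E := V →L[ℂ] V)).mp hKpos
    obtain ⟨g, hg, hg0⟩ :=
      (((S.isCompactOperator_AinvR hcpt).restrict' hV).hasEigenvalue_norm_of_nonneg
        (S.isSymmetric_AinvR.restrict_invariant hV)
        (fun x => (S.re_inner_AinvR_self x).symm ▸ sq_nonneg _) hK0).exists_hasEigenvector
    have hKg : S.AinvR g = (‖K‖ : ℂ) • (g : Hhalf) :=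
      congrArg Subtype.val (Module.End.mem_eigenspace_iff.mp hg)
    have hA₀g : S.A₀ g = ((‖K‖⁻¹ : ℝ) : ℂ) • S.j (S.ι g) := by
      rw [← A₀_AinvR, hKg, map_smul, smul_smul, Complex.ofReal_inv,
        inv_mul_cancel₀ (by exact_mod_cast hKpos.ne'), one_smul]
    have hgG : (g : Hhalf) ∈ S.lowModes c :=
      Submodule.subset_span ⟨‖K‖⁻¹, (inv_le_iff_one_le_mul₀ hKpos).mpr (by linarith), hA₀g⟩
    exact hg0 (Subtype.ext (inner_self_eq_zero.mp (g.2 _ hgG)))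
  · calc ‖S.ι x‖ ^ 2 = RCLike.re ⟪K ⟨x, hx⟩, ⟨x, hx⟩⟫_ℂ := (S.re_inner_AinvR_self x).symm
      _ ≤ ‖K ⟨x, hx⟩‖ * ‖x‖ := re_inner_le_norm _ _
      _ ≤ ‖K‖ * ‖x‖ * ‖x‖ := by gcongr; exact K.le_opNorm _
      _ = ‖K‖ * ‖x‖ ^ 2 := by ring

end BeamSetup

theorem exists_eventually_le_sq_norm {E F : Type*} [NormedAddCommGroup E] [NormedSpace ℂ E]
    [NormedAddCommGroup F] [NormedSpace ℂ F] (ι : E →L[ℂ] F) (lam : ℝ) {x w : ℕ → E}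
    (hnorm : ∀ n, ‖x n‖ ^ 2 + ‖ι (w n)‖ ^ 2 = 1)
    (hconv : Tendsto (fun n => w n - (lam : ℂ) • x n) atTop (nhds 0)) :
    ∃ δ > 0, ∀ᶠ n in atTop, δ ≤ ‖x n‖ ^ 2 := by
  set c := |lam| * ‖ι‖
  have hsmall : Tendsto (fun n => ‖ι (w n - (lam : ℂ) • x n)‖) atTop (nhds 0) := by
    simpa using ((ι.continuous.tendsto 0).comp hconv).norm
  refine ⟨1 / (2 * (1 + 2 * c ^ 2)), by positivity, ?_⟩
  filter_upwards [hsmall.eventually (ge_mem_nhds (by norm_num : (0 : ℝ) < 1 / 2))] with n hn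
  set a := ‖ι (w n - (lam : ℂ) • x n)‖
  have hw : ‖ι (w n)‖ ≤ a + c * ‖x n‖ := calc
    ‖ι (w n)‖ = ‖ι (w n - (lam : ℂ) • x n) + (lam : ℂ) • ι (x n)‖ := by
      rw [map_sub, map_smul, sub_add_cancel]
    _ ≤ a + ‖(lam : ℂ) • ι (x n)‖ := norm_add_le _ _
    _ ≤ a + c * ‖x n‖ := by
      rw [norm_smul, Complex.norm_real, Real.norm_eq_abs, mul_assoc]
      gcongr
      exact ι.le_opNorm _
  rw [div_le_iff₀ (by positivity)]
  nlinarith [hnorm n, norm_nonneg (ι (w n)), norm_nonneg (ι (w n - (lam : ℂ) • x n)),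
    sq_nonneg (a - c * ‖x n‖)]

open Filter in
theorem statement19_general {Hhalf H Hm : Type*}
    [NormedAddCommGroup Hhalf] [InnerProductSpace ℂ Hhalf] [CompleteSpace Hhalf]
    [NormedAddCommGroup H] [InnerProductSpace ℂ H] [CompleteSpace H]
    [NormedAddCommGroup Hm] [InnerProductSpace ℂ Hm] [CompleteSpace Hm]
    (S : BeamSetup Hhalf H Hm)
    (hcpt : IsCompactOperator ⇑S.AinvH)
    (lam : ℝ)
    (G : Submodule ℂ Hhalf)
    (hG : G = Submodule.span ℂ
      {g : Hhalf | ∃ ν : ℝ, ν ≤ lam ^ 2 ∧ S.A₀ g = (ν : ℂ) • S.j (S.ι g)})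
    (x w : ℕ → Hhalf) (u : ℕ → H)
    (hperp1 : ∀ n, ∀ g ∈ G, ⟪g, x n⟫_ℂ = 0)
    (hnorm : ∀ n, ‖x n‖ ^ 2 + ‖S.ι (w n)‖ ^ 2 = 1)
    (hconv : Tendsto
      (fun n => ((w n - (lam : ℂ) • x n, -(u n) - (lam : ℂ) • S.ι (w n)) : Hhalf × H))
      atTop (nhds 0)) :
    0 < Filter.liminf (fun n => ‖x n‖ ^ 2 - lam ^ 2 * ‖S.ι (x n)‖ ^ 2) atTop := by
  subst hG
  obtain ⟨μ, hμ, hbound⟩ := S.exists_sq_norm_le_of_mem_orthogonal_lowModes hcpt (lam ^ 2)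
  obtain ⟨δ, hδ, hlarge⟩ := exists_eventually_le_sq_norm S.ι lam hnorm
    (by simpa using hconv.fst_nhds)
  have hlower : ∀ᶠ n in atTop,
      (1 - μ * lam ^ 2) * δ ≤ ‖x n‖ ^ 2 - lam ^ 2 * ‖S.ι (x n)‖ ^ 2 := by
    filter_upwards [hlarge] with n hn
    nlinarith [mul_le_mul_of_nonneg_left (hbound (x n) (hperp1 n)) (sq_nonneg lam),
      mul_le_mul_of_nonneg_left hn (sub_nonneg.mpr hμ.le)]
  have hbdd : IsBoundedUnder (· ≤ ·) atTop
      (fun n => ‖x n‖ ^ 2 - lam ^ 2 * ‖S.ι (x n)‖ ^ 2) :=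
    isBoundedUnder_of ⟨1, fun n => by
      nlinarith [hnorm n, mul_nonneg (sq_nonneg lam) (sq_nonneg ‖S.ι (x n)‖),
        sq_nonneg ‖S.ι (w n)‖]⟩
  exact (mul_pos (by linarith) hδ).trans_le (le_liminf_of_le hbdd.isCoboundedUnder_ge hlower)

open Filter in
/-- Let `λ < 0` and let `G` be the span of the eigenvectors of `A₀` for
eigenvalues `ν ≤ λ²` (a finite-dimensional space since `A₀⁻¹` is compact). For every
sequence `(xₙ, ι wₙ) ∈ 𝒟(𝒜) ∩ (G × G)^⊥` with `‖(xₙ, ι wₙ)‖² = 1` and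
`(𝒜 − λ)(xₙ, ι wₙ) → 0`, one has
`liminf (⟨A₀ xₙ, xₙ⟩ − λ² ⟨xₙ, xₙ⟩) = liminf (‖xₙ‖²_{H_{1/2}} − λ² ‖xₙ‖²_H) > 0`. -/
theorem statement19 {Hhalf H Hm : Type*}
    [NormedAddCommGroup Hhalf] [InnerProductSpace ℂ Hhalf] [CompleteSpace Hhalf]
    [NormedAddCommGroup H] [InnerProductSpace ℂ H] [CompleteSpace H]
    [NormedAddCommGroup Hm] [InnerProductSpace ℂ Hm] [CompleteSpace Hm]
    (S : BeamSetup Hhalf H Hm)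
    (hcpt : IsCompactOperator ⇑S.AinvH)
    (h0 : (0 : ℂ) ∉ essSpectrum S.T)
    (lam : ℝ) (hlam : lam < 0)
    (G : Submodule ℂ Hhalf)
    (hG : G = Submodule.span ℂ
      {g : Hhalf | ∃ ν : ℝ, ν ≤ lam ^ 2 ∧ S.A₀ g = (ν : ℂ) • S.j (S.ι g)})
    (x w : ℕ → Hhalf) (u : ℕ → H)
    (hdom : ∀ n, S.j (u n) = S.A₀ (x n) + S.D (w n))
    (hperp1 : ∀ n, ∀ g ∈ G, ⟪g, x n⟫_ℂ = 0)
    (hperp2 : ∀ n, ∀ g ∈ G, ⟪S.ι g, S.ι (w n)⟫_ℂ = 0)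
    (hnorm : ∀ n, ‖x n‖ ^ 2 + ‖S.ι (w n)‖ ^ 2 = 1)
    (hconv : Tendsto
      (fun n => ((w n - (lam : ℂ) • x n, -(u n) - (lam : ℂ) • S.ι (w n)) : Hhalf × H))
      atTop (nhds 0)) :
    0 < Filter.liminf (fun n => ‖x n‖ ^ 2 - lam ^ 2 * ‖S.ι (x n)‖ ^ 2) atTop :=
  statement19_general S hcpt lam G hG x w u hperp1 hnorm hconv
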